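/- arXiv:2101.10596 — 3 statements merged into one kernel-verified Lean document; each statement's English description precedes it below -/
import Mathlib

section
/- The Y-shaped graph is (1,2)-Tverberg: let Y be the simplicial complex in ℝ² with vertices p_0 = (0,0), p_1 = (1,0), p_2 = (0,1), p_3 = (−1,−1) and with faces the four vertices and the three segments [p_0,p_1], [p_0,p_2], [p_0,p_3]. For every continuous map f : |Y| → ℝ there exist two faces σ, τ of Y with disjoint vertex sets such that f(σ) ∩ f(τ) ≠ ∅. -/
open Geometry


lemma y_key (K : SimplicialComplex ℝ (ℝ × ℝ)) (f : C(↥K.space, ℝ))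
    (q r : ℝ × ℝ)
    (hq : ({((0:ℝ),(0:ℝ)), q} : Finset (ℝ × ℝ)) ∈ K.faces)
    (hr : ({r} : Finset (ℝ × ℝ)) ∈ K.faces)
    (h0 : r ≠ ((0:ℝ),(0:ℝ))) (h1 : r ≠ q)
    (hqs : q ∈ K.space) (hrs : r ∈ K.space) (h0s : ((0:ℝ),(0:ℝ)) ∈ K.space)
    (hc : f ⟨r, hrs⟩ ∈ Set.uIcc (f ⟨((0:ℝ),(0:ℝ)), h0s⟩) (f ⟨q, hqs⟩)) :
    ∃ σ ∈ K.faces, ∃ τ ∈ K.faces, Disjoint σ τ ∧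
      (f '' {x : ↥K.space | (x : ℝ × ℝ) ∈ convexHull ℝ (σ : Set (ℝ × ℝ))} ∩
        f '' {x : ↥K.space | (x : ℝ × ℝ) ∈ convexHull ℝ (τ : Set (ℝ × ℝ))}).Nonempty := by
  refine ⟨{r}, hr, {((0:ℝ),(0:ℝ)), q}, hq, ?_, ?_⟩
  · simp only [Finset.disjoint_left, Finset.mem_singleton, Finset.mem_insert]
    rintro a rfl
    exact fun h => h.elim h0 h1
  -- segment map
  have hseg : ∀ s : ℝ, s ∈ Set.Icc (0:ℝ) 1 →
      s • q ∈ convexHull ℝ (({((0:ℝ),(0:ℝ)), q} : Finset (ℝ × ℝ)) : Set (ℝ × ℝ)) := by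
    intro s hs
    have : (({((0:ℝ),(0:ℝ)), q} : Finset (ℝ × ℝ)) : Set (ℝ × ℝ)) = {((0:ℝ),(0:ℝ)), q} := by
      simp
    rw [this, convexHull_pair]
    exact ⟨1 - s, s, by linarith [hs.2], hs.1, by ring, by
      have : ((0:ℝ),(0:ℝ)) = (0 : ℝ × ℝ) := rfl
      simp [this]⟩
  have hmem : ∀ s : ℝ, s ∈ Set.Icc (0:ℝ) 1 → s • q ∈ K.space := fun s hs =>
    K.convexHull_subset_space hq (hseg s hs)
  set cl : ℝ → ℝ := fun t => min (max t 0) 1 with hcl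
  have hclmem : ∀ t, cl t ∈ Set.Icc (0:ℝ) 1 := fun t =>
    ⟨le_min (le_max_right _ _) zero_le_one, min_le_right _ _⟩
  set F : ℝ → ℝ := fun t => f ⟨cl t • q, hmem _ (hclmem t)⟩ with hF
  have hcont : Continuous F := by
    apply f.continuous.comp
    apply Continuous.subtype_mk
    exact (((continuous_id.max continuous_const).min continuous_const).smul continuous_const)
  have h01 : Set.uIcc (F 0) (F 1) ⊆ F '' Set.uIcc 0 1 :=
    intermediate_value_uIcc hcont.continuousOn
  have hF0 : F 0 = f ⟨((0:ℝ),(0:ℝ)), h0s⟩ := by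
    have : cl 0 = 0 := by norm_num [hcl]
    simp only [hF, this, zero_smul]
    rfl
  have hF1 : F 1 = f ⟨q, hqs⟩ := by
    have : cl 1 = 1 := by norm_num [hcl]
    simp only [hF, this, one_smul]
  rw [hF0, hF1] at h01
  obtain ⟨t, ht, hft⟩ := h01 hc
  refine ⟨f ⟨r, hrs⟩, ⟨⟨r, hrs⟩, ?_, rfl⟩, ⟨⟨cl t • q, hmem _ (hclmem t)⟩, ?_, hft⟩⟩
  · simp only [Set.mem_setOf_eq, Finset.coe_singleton]
    exact subset_convexHull ℝ _ rfl
  · exact hseg _ (hclmem t)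


set_option maxHeartbeats 2000000 in
/-- **The `Y`-shaped graph is `(1,2)`-Tverberg.** Let `Y` be the simplicial complex in
`ℝ²` with vertices `p₀ = (0,0)`, `p₁ = (1,0)`, `p₂ = (0,1)`, `p₃ = (-1,-1)` and faces
the four vertices together with the three segments `[p₀,p₁]`, `[p₀,p₂]`, `[p₀,p₃]`.
Then for every continuous map `f : |Y| → ℝ` there are two faces `σ, τ` of `Y` with
disjoint vertex sets such that `f(σ) ∩ f(τ) ≠ ∅`. -/
theorem y_graph_tverberg (K : SimplicialComplex ℝ (ℝ × ℝ))
    (hK : K.faces =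
      {{((0 : ℝ), (0 : ℝ))}, {((1 : ℝ), (0 : ℝ))}, {((0 : ℝ), (1 : ℝ))},
        {((-1 : ℝ), (-1 : ℝ))},
        {((0 : ℝ), (0 : ℝ)), ((1 : ℝ), (0 : ℝ))},
        {((0 : ℝ), (0 : ℝ)), ((0 : ℝ), (1 : ℝ))},
        {((0 : ℝ), (0 : ℝ)), ((-1 : ℝ), (-1 : ℝ))}})
    (f : C(↥K.space, ℝ)) :
    ∃ σ ∈ K.faces, ∃ τ ∈ K.faces, Disjoint σ τ ∧
      (f '' {x : ↥K.space | (x : ℝ × ℝ) ∈ convexHull ℝ (σ : Set (ℝ × ℝ))} ∩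
        f '' {x : ↥K.space | (x : ℝ × ℝ) ∈ convexHull ℝ (τ : Set (ℝ × ℝ))}).Nonempty := by
  have h0f : ({((0:ℝ),(0:ℝ))} : Finset (ℝ × ℝ)) ∈ K.faces := by
    rw [hK]; exact Or.inl rfl
  have h1f : ({((1:ℝ),(0:ℝ))} : Finset (ℝ × ℝ)) ∈ K.faces := by
    rw [hK]; exact Or.inr (Or.inl rfl)
  have h2f : ({((0:ℝ),(1:ℝ))} : Finset (ℝ × ℝ)) ∈ K.faces := by
    rw [hK]; exact Or.inr (Or.inr (Or.inl rfl))
  have h3f : ({((-1:ℝ),(-1:ℝ))} : Finset (ℝ × ℝ)) ∈ K.faces := by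
    rw [hK]; exact Or.inr (Or.inr (Or.inr (Or.inl rfl)))
  have he1 : ({((0:ℝ),(0:ℝ)), ((1:ℝ),(0:ℝ))} : Finset (ℝ × ℝ)) ∈ K.faces := by
    rw [hK]; exact Or.inr (Or.inr (Or.inr (Or.inr (Or.inl rfl))))
  have he2 : ({((0:ℝ),(0:ℝ)), ((0:ℝ),(1:ℝ))} : Finset (ℝ × ℝ)) ∈ K.faces := by
    rw [hK]; exact Or.inr (Or.inr (Or.inr (Or.inr (Or.inr (Or.inl rfl)))))
  have he3 : ({((0:ℝ),(0:ℝ)), ((-1:ℝ),(-1:ℝ))} : Finset (ℝ × ℝ)) ∈ K.faces := by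
    rw [hK]; exact Or.inr (Or.inr (Or.inr (Or.inr (Or.inr (Or.inr rfl)))))
  have h0s : ((0:ℝ),(0:ℝ)) ∈ K.space := K.subset_space h0f (by simp)
  have h1s : ((1:ℝ),(0:ℝ)) ∈ K.space := K.subset_space h1f (by simp)
  have h2s : ((0:ℝ),(1:ℝ)) ∈ K.space := K.subset_space h2f (by simp)
  have h3s : ((-1:ℝ),(-1:ℝ)) ∈ K.space := K.subset_space h3f (by simp)
  set a := f ⟨((0:ℝ),(0:ℝ)), h0s⟩ with ha
  set b1 := f ⟨((1:ℝ),(0:ℝ)), h1s⟩ with hb1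
  set b2 := f ⟨((0:ℝ),(1:ℝ)), h2s⟩ with hb2
  set b3 := f ⟨((-1:ℝ),(-1:ℝ)), h3s⟩ with hb3
  have h6 : b1 ∈ Set.uIcc a b2 ∨ b2 ∈ Set.uIcc a b1 ∨ b1 ∈ Set.uIcc a b3 ∨
      b3 ∈ Set.uIcc a b1 ∨ b2 ∈ Set.uIcc a b3 ∨ b3 ∈ Set.uIcc a b2 := by
    simp only [Set.mem_uIcc]
    rcases le_total b1 a with h|h <;> rcases le_total b2 a with h'|h' <;>
      rcases le_total b3 a with h''|h'' <;> rcases le_total b1 b2 with h₁|h₁ <;>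
      rcases le_total b1 b3 with h₂|h₂ <;> rcases le_total b2 b3 with h₃|h₃ <;> tauto
  rcases h6 with hc|hc|hc|hc|hc|hc
  · exact y_key K f _ _ he2 h1f (by norm_num) (by norm_num) h2s h1s h0s hc
  · exact y_key K f _ _ he1 h2f (by norm_num) (by norm_num) h1s h2s h0s hc
  · exact y_key K f _ _ he3 h1f (by norm_num) (by norm_num) h3s h1s h0s hc
  · exact y_key K f _ _ he1 h3f (by norm_num) (by norm_num) h1s h3s h0s hc
  · exact y_key K f _ _ he3 h2f (by norm_num) (by norm_num) h3s h2s h0s hc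
  · exact y_key K f _ _ he2 h3f (by norm_num) (by norm_num) h2s h3s h0s hc
end

section
/- Disjoint unions of paths are not (1,2)-Tverberg: let K be a finite 1-dimensional simplicial complex in ℝ^N whose underlying graph (vertices of K and edges of K) is a disjoint union of path graphs, i.e. it contains no cycle and every vertex lies in at most two edges. Then there exists a continuous map f : |K| → ℝ such that f(σ) ∩ f(τ) = ∅ for every pair of faces σ, τ of K with disjoint vertex sets. -/
/-!
Label the vertices by distinct integers so that adjacent vertices get consecutive labels. Such a
labelling is built by induction on the edges: delete an edge `uv` (a bridge, since the graph is a
forest), label what is left, and observe that `u` and `v` now have degree at most one, so their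
labels are extreme within their components; flip and shift the two components so that they meet
at `0 | 1` and move everything else far away. Extending the labelling linearly along the edges
maps each face onto an integer interval of length at most one, and two faces with disjoint
vertex sets have four distinct integer endpoints, so their intervals are disjoint.
-/

open Set

namespace SimpleGraph

variable {α : Type*} {G H : SimpleGraph α} {s t : Set α} {h h' : α → ℤ} {u v : α}

def IsLineEmbedding (G : SimpleGraph α) (s : Set α) (h : α → ℤ) : Prop :=
  InjOn h s ∧ ∀ x ∈ s, ∀ y ∈ s, (G.Adj x y ↔ (h x - h y).natAbs = 1)

lemma Reachable.mem_of_support_subset (hs : G.support ⊆ s) (hu : u ∈ s)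
    (huv : G.Reachable u v) : v ∈ s := by
  rcases eq_or_ne v u with rfl | hne
  · exact hu
  · exact hs (mem_support_of_reachable hne huv.symm)

lemma Walk.exists_reachable_eq_of_le (hstep : ∀ x y, G.Adj x y → (h x - h y).natAbs ≤ 1)
    {x y : α} (p : G.Walk x y) {c : ℤ} (hx : h x ≤ c) (hy : c ≤ h y) :
    ∃ z, G.Reachable x z ∧ h z = c := by
  induction p with
  | nil => exact ⟨_, .rfl, by omega⟩
  | @cons a b _ hab _ ih =>
    by_cases hc : c ≤ h a
    · exact ⟨a, .rfl, by omega⟩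
    · obtain ⟨z, hz, rfl⟩ := ih (by have := hstep a b hab; omega) hy
      exact ⟨z, hab.reachable.trans hz, rfl⟩

lemma exists_isLineEmbedding_of_edgeSet_eq_empty (hs : s.Countable) (hG : G.edgeSet = ∅) :
    ∃ h, G.IsLineEmbedding s h := by
  obtain ⟨f, hf⟩ := countable_iff_exists_injOn.1 hs
  refine ⟨fun x => 2 * f x, fun x hx y hy hxy => hf hx hy (by simpa using hxy),
    fun x _ y _ => ?_⟩
  simp only [edgeSet_eq_empty.1 hG, bot_adj, false_iff]
  omega

namespace IsLineEmbedding

lemma natAbs_sub_eq_one (hh : G.IsLineEmbedding s h) (hs : G.support ⊆ s) {x y : α}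
    (hxy : G.Adj x y) : (h x - h y).natAbs = 1 :=
  (hh.2 x (hs hxy.mem_support_left) y (hs hxy.mem_support_right)).1 hxy

lemma exists_sign_of_ncard_neighborSet_le_one (hh : G.IsLineEmbedding s h)
    (hs : G.support ⊆ s) (hfin : s.Finite) (hu : u ∈ s) (hdeg : (G.neighborSet u).ncard ≤ 1) :
    ∃ ε : ℤ, (ε = 1 ∨ ε = -1) ∧ ∀ x, G.Reachable u x → ε * (h x - h u) ≤ 0 := by
  have hstep : ∀ x y, G.Adj x y → (h x - h y).natAbs ≤ 1 :=
    fun x y hxy => (hh.natAbs_sub_eq_one hs hxy).le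
  have hnbr : ∀ z, G.Reachable u z → (h z - h u).natAbs = 1 → z ∈ G.neighborSet u :=
    fun z hz hzu => (hh.2 u hu z (hz.mem_of_support_subset hs hu)).2 (by omega)
  by_contra! hcon
  obtain ⟨x₁, ⟨p₁⟩, hx₁⟩ := hcon 1 (.inl rfl)
  obtain ⟨x₂, hux₂, hx₂⟩ := hcon (-1) (.inr rfl)
  obtain ⟨p₂⟩ := hux₂.symm
  obtain ⟨z₁, hz₁, hz₁u⟩ :=
    p₁.exists_reachable_eq_of_le hstep (c := h u + 1) (by omega) (by omega)
  obtain ⟨z₂, hz₂, hz₂u⟩ :=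
    p₂.exists_reachable_eq_of_le hstep (c := h u - 1) (by omega) (by omega)
  have hz : z₁ = z₂ :=
    (ncard_le_one (hfin.subset ((G.neighborSet_subset_support u).trans hs))).1
      hdeg z₁ (hnbr z₁ hz₁ (by omega)) z₂ (hnbr z₂ (hux₂.trans hz₂) (by omega))
  subst hz
  omega

lemma of_eqOn_affine (hh : G.IsLineEmbedding s h) (hts : t ⊆ s)
    (hHG : ∀ x ∈ t, ∀ y ∈ t, H.Adj x y ↔ G.Adj x y) {ε c : ℤ} (hε : ε = 1 ∨ ε = -1)
    (heq : ∀ x ∈ t, h' x = ε * h x + c) : H.IsLineEmbedding t h' := by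
  refine ⟨fun x hx y hy hxy => hh.1 (hts hx) (hts hy) ?_, fun x hx y hy => ?_⟩
  · rw [heq x hx, heq y hy] at hxy
    rcases hε with rfl | rfl <;> omega
  · rw [hHG x hx y hy, hh.2 x (hts hx) y (hts hy), heq x hx, heq y hy]
    rcases hε with rfl | rfl <;> omega

lemma union (hs : G.IsLineEmbedding s h) (ht : G.IsLineEmbedding t h)
    (hst : ∀ x ∈ s, ∀ y ∈ t, h x < h y ∧ (G.Adj x y ↔ h y = h x + 1)) :
    G.IsLineEmbedding (s ∪ t) h := by
  refine ⟨?_, ?_⟩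
  · rintro x (hx | hx) y (hy | hy) hxy
    · exact hs.1 hx hy hxy
    · exact absurd hxy (hst x hx y hy).1.ne
    · exact absurd hxy (hst y hy x hx).1.ne'
    · exact ht.1 hx hy hxy
  · rintro x (hx | hx) y (hy | hy)
    · exact hs.2 x hx y hy
    · have := (hst x hx y hy).1
      rw [(hst x hx y hy).2]
      omega
    · have := (hst y hy x hx).1
      rw [G.adj_comm, (hst y hy x hx).2]
      omega
    · exact ht.2 x hx y hy

end IsLineEmbedding

lemma sup_edge_adj_iff_of_notMem_or_notMem (huvt : u ∉ t ∨ v ∉ t) {x y : α} (hx : x ∈ t)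
    (hy : y ∈ t) : (G ⊔ edge u v).Adj x y ↔ G.Adj x y := by
  simp only [sup_adj, edge_adj, or_iff_left_iff_imp]
  rintro ⟨⟨rfl, rfl⟩ | ⟨rfl, rfl⟩, -⟩ <;> tauto

lemma IsLineEmbedding.union_sup_edge (hs : (G ⊔ edge u v).IsLineEmbedding s h)
    (ht : (G ⊔ edge u v).IsLineEmbedding t h) (hus : u ∈ s) (hvt : v ∈ t)
    (hsu : ∀ x ∈ s, h x ≤ h u) (htv : ∀ y ∈ t, h v ≤ h y) (huv : h v = h u + 1)
    (hG : ∀ x ∈ s, ∀ y ∈ t, ¬ G.Adj x y) : (G ⊔ edge u v).IsLineEmbedding (s ∪ t) h := by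
  refine hs.union ht fun x hx y hy => ⟨by linarith [hsu x hx, htv y hy], ?_⟩
  have hxv : x ≠ v := fun hxv => by linarith [hsu x hx, hxv ▸ huv]
  simp only [sup_adj, edge_adj, hG x hx y hy, false_or]
  constructor
  · rintro ⟨⟨rfl, rfl⟩ | ⟨rfl, -⟩, -⟩
    · exact huv
    · exact absurd rfl hxv
  · intro hxy
    have := hsu x hx
    have := htv y hy
    obtain rfl := hs.1 hx hus (by omega)
    obtain rfl := ht.1 hy hvt (by omega)
    exact ⟨.inl ⟨rfl, rfl⟩, fun e => by rw [e] at huv; omega⟩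

lemma IsLineEmbedding.union_of_add_two_le (hs : G.IsLineEmbedding s h)
    (ht : G.IsLineEmbedding t h) (hst : ∀ x ∈ s, ∀ y ∈ t, h x + 2 ≤ h y ∧ ¬ G.Adj x y) :
    G.IsLineEmbedding (s ∪ t) h :=
  hs.union ht fun x hx y hy => ⟨by linarith [(hst x hx y hy).1],
    iff_of_false (hst x hx y hy).2 (by linarith [(hst x hx y hy).1])⟩

lemma IsLineEmbedding.exists_sup_edge (hh : G.IsLineEmbedding s h)
    (hfin : s.Finite) (huv : ¬ G.Reachable u v) {εu εv : ℤ} (hεu : εu = 1 ∨ εu = -1)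
    (hεv : εv = 1 ∨ εv = -1) (hu : ∀ x, G.Reachable u x → εu * (h x - h u) ≤ 0)
    (hv : ∀ x, G.Reachable v x → εv * (h x - h v) ≤ 0) (hus : u ∈ s) (hvs : v ∈ s) :
    ∃ h', (G ⊔ edge u v).IsLineEmbedding s h' := by
  classical
  obtain ⟨M, hM⟩ : ∃ M : ℕ, ∀ x ∈ s, (h x).natAbs ≤ M := by
    obtain ⟨M, hM⟩ := (hfin.image fun x => (h x).natAbs).bddAbove
    exact ⟨M, fun x hx => hM ⟨x, hx, rfl⟩⟩
  set A := {x ∈ s | G.Reachable u x}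
  set C := {x ∈ s | G.Reachable v x}
  set O := {x ∈ s | ¬ G.Reachable u x ∧ ¬ G.Reachable v x}
  -- the components of `u` and `v` go to either side of `0 | 1`, everything else far to the right
  set h' : α → ℤ := fun x =>
    if G.Reachable u x then εu * (h x - h u)
    else if G.Reachable v x then 1 - εv * (h x - h v) else h x + (4 * M + 3)
  have hA : ∀ x ∈ A, h' x = εu * (h x - h u) ∧ -(2 * M : ℤ) ≤ h' x ∧ h' x ≤ 0 := by
    rintro x ⟨hx, hux⟩
    have := hu x hux; have := hM x hx; have := hM u hus
    simp only [h', if_pos hux, true_and]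
    rcases hεu with rfl | rfl <;> omega
  have hC : ∀ x ∈ C, h' x = 1 - εv * (h x - h v) ∧ 1 ≤ h' x ∧ h' x ≤ 2 * M + 1 := by
    rintro x ⟨hx, hvx⟩
    have hux : ¬ G.Reachable u x := fun hux => huv (hux.trans hvx.symm)
    have := hv x hvx; have := hM x hx; have := hM v hvs
    simp only [h', if_neg hux, if_pos hvx, true_and]
    rcases hεv with rfl | rfl <;> omega
  have hO : ∀ x ∈ O, h' x = h x + (4 * M + 3) ∧ 3 * M + 3 ≤ h' x := by
    rintro x ⟨hx, hux, hvx⟩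
    have := hM x hx
    simp only [h', if_neg hux, if_neg hvx, true_and]
    omega
  have hA' : (G ⊔ edge u v).IsLineEmbedding A h' := hh.of_eqOn_affine (sep_subset _ _)
    (fun _ hx _ hy => sup_edge_adj_iff_of_notMem_or_notMem (.inr fun hvA => huv hvA.2) hx hy)
    hεu (c := -(εu * h u)) fun x hx => by rw [(hA x hx).1]; ring
  have hC' : (G ⊔ edge u v).IsLineEmbedding C h' := hh.of_eqOn_affine (sep_subset _ _)
    (fun _ hx _ hy => sup_edge_adj_iff_of_notMem_or_notMem (.inl fun huC => huv huC.2.symm) hx hy)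
    (ε := -εv) (by omega) (c := 1 + εv * h v) fun x hx => by rw [(hC x hx).1]; ring
  have hO' : (G ⊔ edge u v).IsLineEmbedding O h' := hh.of_eqOn_affine (sep_subset _ _)
    (fun _ hx _ hy => sup_edge_adj_iff_of_notMem_or_notMem (.inl fun huO => huO.2.1 .rfl) hx hy)
    (.inl rfl) (c := 4 * M + 3) fun x hx => by rw [(hO x hx).1]; ring
  have hu0 : h' u = 0 := by simp [(hA u ⟨hus, .rfl⟩).1]
  have hv1 : h' v = 1 := by simp [(hC v ⟨hvs, .rfl⟩).1]
  have hAC := hA'.union_sup_edge hC' ⟨hus, .rfl⟩ ⟨hvs, .rfl⟩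
    (fun x hx => hu0 ▸ (hA x hx).2.2) (fun y hy => hv1 ▸ (hC y hy).2.1) (by rw [hu0, hv1]; rfl)
    fun x hx y hy hxy => huv (hx.2.trans (hxy.reachable.trans hy.2.symm))
  refine ⟨h', ?_⟩
  convert hAC.union_of_add_two_le hO' fun x hx y hy => ⟨?_, ?_⟩ using 1
  · ext x
    simp only [A, C, O, mem_union, mem_sep_iff]
    tauto
  · have := (hO y hy).2
    rcases hx with hx | hx
    · linarith [(hA x hx).2.2]
    · linarith [(hC x hx).2.2]
  · simp only [sup_adj, edge_adj, not_or]
    refine ⟨fun hxy => ?_, ?_⟩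
    · rcases hx with hx | hx
      · exact hy.2.1 (hx.2.trans hxy.reachable)
      · exact hy.2.2 (hx.2.trans hxy.reachable)
    · rintro ⟨⟨-, rfl⟩ | ⟨-, rfl⟩, -⟩
      · exact hy.2.2 .rfl
      · exact hy.2.1 .rfl

lemma ncard_neighborSet_deleteEdges_lt (huv : G.Adj u v) (hfin : (G.neighborSet u).Finite) :
    ((G.deleteEdges {s(u, v)}).neighborSet u).ncard < (G.neighborSet u).ncard := by
  have : G.neighborSet u = insert v ((G.deleteEdges {s(u, v)}).neighborSet u) := by
    ext w
    by_cases hw : w = v <;> simp [hw, huv, huv.ne]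
  rw [this, ncard_insert_of_notMem (by simp) (hfin.subset (by simp [this]))]
  exact Nat.lt_succ_self _

lemma deleteEdges_sup_edge (huv : G.Adj u v) : G.deleteEdges {s(u, v)} ⊔ edge u v = G := by
  ext x y
  simp only [sup_adj, deleteEdges_adj, edge_adj, mem_singleton_iff, Sym2.eq_iff]
  constructor
  · rintro (⟨hxy, -⟩ | ⟨⟨rfl, rfl⟩ | ⟨rfl, rfl⟩, -⟩)
    exacts [hxy, huv, huv.symm]
  · intro hxy
    by_cases h : x = u ∧ y = v ∨ x = v ∧ y = u
    · exact .inr ⟨h, hxy.ne⟩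
    · exact .inl ⟨hxy, h⟩

theorem exists_isLineEmbedding (hfin : s.Finite) (hs : G.support ⊆ s) (hG : G.IsAcyclic)
    (hdeg : ∀ v, (G.neighborSet v).ncard ≤ 2) : ∃ h, G.IsLineEmbedding s h := by
  induction hn : G.edgeSet.ncard using Nat.strong_induction_on generalizing G with
  | _ n ih =>
  rcases G.edgeSet.eq_empty_or_nonempty with hE | ⟨e, he⟩
  · exact exists_isLineEmbedding_of_edgeSet_eq_empty hfin.countable hE
  induction e using Sym2.ind with
  | _ u v =>
  have huv : G.Adj u v := he
  set G' := G.deleteEdges {s(u, v)}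
  have hG' : G' ≤ G := deleteEdges_le _
  have hs' : G'.support ⊆ s := (support_mono hG').trans hs
  have hnbr : ∀ w, (G.neighborSet w).Finite :=
    fun w => hfin.subset ((G.neighborSet_subset_support w).trans hs)
  have hEfin : G.edgeSet.Finite := (hfin.toFinset.sym2.finite_toSet).subset
    (by rw [Finset.coe_sym2, hfin.coe_toFinset]; exact edgeSet_subset_sym2_iff.2 hs)
  obtain ⟨h, hh⟩ := ih _ (hn ▸ edgeSet_deleteEdges _ ▸ ncard_sdiff_singleton_lt_of_mem he hEfin)
    hs' (hG.anti hG') (fun w => (ncard_le_ncard (neighborSet_mono hG' w) (hnbr w)).trans (hdeg w))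
    rfl
  have hbridge : ¬ G'.Reachable u v :=
    isBridge_iff.1 (isAcyclic_iff_forall_adj_isBridge.1 hG huv)
  have hdegu : (G'.neighborSet u).ncard ≤ 1 := Nat.le_of_lt_succ <|
    (ncard_neighborSet_deleteEdges_lt huv (hnbr u)).trans_le (hdeg u)
  have hdegv : (G'.neighborSet v).ncard ≤ 1 := Nat.le_of_lt_succ <|
    (Sym2.eq_swap (a := u) ▸ ncard_neighborSet_deleteEdges_lt huv.symm (hnbr v)).trans_le (hdeg v)
  have hus := hs huv.mem_support_left
  have hvs := hs huv.mem_support_right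
  obtain ⟨εu, hεu, hu⟩ := hh.exists_sign_of_ncard_neighborSet_le_one hs' hfin hus hdegu
  obtain ⟨εv, hεv, hv⟩ := hh.exists_sign_of_ncard_neighborSet_le_one hs' hfin hvs hdegv
  obtain ⟨h', hh'⟩ := hh.exists_sup_edge hfin hbridge hεu hεv hu hv hus hvs
  exact ⟨h', deleteEdges_sup_edge huv ▸ hh'⟩

end SimpleGraph

section LineParam

variable {ι : Type*} [Fintype ι] {a b x : ι → ℝ}

-- `0` when `a = b` (division by zero)
noncomputable def lineParam (a b x : ι → ℝ) : ℝ := (x - a) ⬝ᵥ (b - a) / ((b - a) ⬝ᵥ (b - a))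

lemma lineParam_lineMap (hab : a ≠ b) (t : ℝ) : lineParam a b (AffineMap.lineMap a b t) = t := by
  have hne : (b - a) ⬝ᵥ (b - a) ≠ 0 := dotProduct_self_eq_zero.not.2 (sub_ne_zero.2 hab.symm)
  rw [lineParam, AffineMap.lineMap_apply_module', add_sub_cancel_right, smul_dotProduct,
    smul_eq_mul, mul_div_assoc, div_self hne, mul_one]

@[simp]
lemma lineParam_left : lineParam a b a = 0 := by simp [lineParam]

lemma continuous_lineParam : Continuous (lineParam a b) :=
  ((continuous_id.sub continuous_const).dotProduct continuous_const).div_const _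

noncomputable def segmentInterp (g : (ι → ℝ) → ℝ) (a b x : ι → ℝ) : ℝ :=
  AffineMap.lineMap (g a) (g b) (lineParam a b x)

variable {g : (ι → ℝ) → ℝ}

@[simp]
lemma segmentInterp_left : segmentInterp g a b a = g a := by simp [segmentInterp]

@[simp]
lemma segmentInterp_right : segmentInterp g a b b = g b := by
  rcases eq_or_ne a b with rfl | hab
  · exact segmentInterp_left
  · simpa [segmentInterp] using
      congrArg (AffineMap.lineMap (g a) (g b)) (lineParam_lineMap hab 1)

lemma segmentInterp_mem_segment (hx : x ∈ segment ℝ a b) :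
    segmentInterp g a b x ∈ segment ℝ (g a) (g b) := by
  rcases eq_or_ne a b with rfl | hab
  · rw [segment_same] at hx
    rw [hx, segmentInterp_left]
    exact left_mem_segment ℝ _ _
  · rw [segment_eq_image_lineMap] at hx ⊢
    obtain ⟨t, ht, rfl⟩ := hx
    exact ⟨t, ht, by rw [segmentInterp, lineParam_lineMap hab]⟩

lemma continuous_segmentInterp : Continuous (segmentInterp g a b) :=
  continuous_const.lineMap continuous_const continuous_lineParam

end LineParam

namespace Geometry.SimplicialComplex

section

variable {E : Type*} [AddCommGroup E] [Module ℝ E] [DecidableEq E] {K : SimplicialComplex ℝ E}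
  {σ τ : Finset E}

lemma exists_eq_pair_of_card_le_two (hσ : σ ∈ K.faces) (hdim : σ.card ≤ 2) :
    ∃ a b, σ = {a, b} := by
  obtain h1 | h2 : σ.card = 1 ∨ σ.card = 2 := by
    have := (K.nonempty_of_mem_faces hσ).card_pos
    omega
  · obtain ⟨a, rfl⟩ := Finset.card_eq_one.1 h1
    exact ⟨a, a, by simp⟩
  · obtain ⟨a, b, -, rfl⟩ := Finset.card_eq_two.1 h2
    exact ⟨a, b, rfl⟩

lemma eq_or_mem_inter_of_mem_convexHull (hdim : ∀ σ ∈ K.faces, σ.card ≤ 2) (hσ : σ ∈ K.faces)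
    (hτ : τ ∈ K.faces) {x : E} (hxσ : x ∈ convexHull ℝ (σ : Set E))
    (hxτ : x ∈ convexHull ℝ (τ : Set E)) : σ = τ ∨ x ∈ σ ∩ τ := by
  have hx : x ∈ convexHull ℝ ((σ ∩ τ : Finset E) : Set E) := by
    rw [Finset.coe_inter]
    exact K.inter_subset_convexHull hσ hτ ⟨hxσ, hxτ⟩
  obtain h0 | h1 | h2 : (σ ∩ τ).card = 0 ∨ (σ ∩ τ).card = 1 ∨ 2 ≤ (σ ∩ τ).card := by omega
  · simp [Finset.card_eq_zero.1 h0] at hx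
  · obtain ⟨w, hw⟩ := Finset.card_eq_one.1 h1
    rw [hw, Finset.coe_singleton, convexHull_singleton, mem_singleton_iff] at hx
    exact .inr (hx ▸ hw ▸ Finset.mem_singleton_self w)
  · left
    rw [← Finset.eq_of_subset_of_card_le Finset.inter_subset_left (h2.trans' (hdim σ hσ)),
      Finset.eq_of_subset_of_card_le Finset.inter_subset_right (h2.trans' (hdim τ hτ))]

end

theorem exists_continuousMap_mem_convexHull_image {ι : Type*} [Fintype ι]
    (K : SimplicialComplex ℝ (ι → ℝ)) (hfin : K.faces.Finite) (hdim : ∀ σ ∈ K.faces, σ.card ≤ 2)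
    (g : (ι → ℝ) → ℝ) :
    ∃ f : C(K.space, ℝ), ∀ σ ∈ K.faces, ∀ x : K.space,
      (x : ι → ℝ) ∈ convexHull ℝ (σ : Set (ι → ℝ)) → f x ∈ convexHull ℝ (g '' σ) := by
  classical
  choose! a b hab using fun σ (hσ : σ ∈ K.faces) => exists_eq_pair_of_card_le_two hσ (hdim σ hσ)
  set F : Finset (ι → ℝ) → (ι → ℝ) → ℝ := fun σ => segmentInterp g (a σ) (b σ)
  have hF_vertex : ∀ σ ∈ K.faces, ∀ w ∈ σ, F σ w = g w := by
    intro σ hσ w hw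
    rw [hab σ hσ, Finset.mem_insert, Finset.mem_singleton] at hw
    rcases hw with rfl | rfl <;> simp [F]
  have hF_agree : ∀ σ ∈ K.faces, ∀ τ ∈ K.faces, ∀ x ∈ convexHull ℝ (σ : Set (ι → ℝ)),
      x ∈ convexHull ℝ (τ : Set (ι → ℝ)) → F σ x = F τ x := by
    intro σ hσ τ hτ x hxσ hxτ
    rcases eq_or_mem_inter_of_mem_convexHull hdim hσ hτ hxσ hxτ with rfl | hx
    · rfl
    · rw [Finset.mem_inter] at hx
      rw [hF_vertex σ hσ x hx.1, hF_vertex τ hτ x hx.2]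
  choose φ hφ hxφ using fun x : K.space => mem_space_iff.1 x.2
  have hcont : Continuous fun x : K.space => F (φ x) x := by
    have : Finite K.faces := hfin
    refine LocallyFinite.continuous (f := fun σ : K.faces =>
      {x : K.space | (x : ι → ℝ) ∈ convexHull ℝ (σ : Set (ι → ℝ))}) (locallyFinite_of_finite _)
      (eq_univ_of_forall fun x => mem_iUnion.2 ⟨⟨φ x, hφ x⟩, hxφ x⟩)
      (fun σ => (σ.1.finite_toSet.isClosed_convexHull (𝕜 := ℝ)).preimage continuous_subtype_val)
      fun σ => ?_
    exact (continuous_segmentInterp.comp continuous_subtype_val).continuousOn.congr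
      fun x hx => hF_agree _ (hφ x) _ σ.2 _ (hxφ x) hx
  refine ⟨⟨_, hcont⟩, fun σ hσ x hx => ?_⟩
  have hpair : g '' σ = {g (a σ), g (b σ)} := by
    conv_lhs => rw [hab σ hσ]
    rw [Finset.coe_pair, image_pair]
  rw [ContinuousMap.coe_mk, hF_agree _ (hφ x) σ hσ _ (hxφ x) hx, hpair, convexHull_pair]
  rw [hab σ hσ, Finset.coe_pair, convexHull_pair] at hx
  exact segmentInterp_mem_segment hx

end Geometry.SimplicialComplex

lemma Real.exists_le_and_exists_ge_of_mem_convexHull {S : Set ℝ} {y : ℝ}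
    (hy : y ∈ convexHull ℝ S) : (∃ a ∈ S, a ≤ y) ∧ ∃ b ∈ S, y ≤ b := by
  have hup : IsUpperSet {z : ℝ | ∃ a ∈ S, a ≤ z} := by
    rintro z w hzw ⟨a, ha, haz⟩
    exact ⟨a, ha, haz.trans hzw⟩
  have hlow : IsLowerSet {z : ℝ | ∃ b ∈ S, z ≤ b} := by
    rintro z w hwz ⟨b, hb, hzb⟩
    exact ⟨b, hb, hwz.trans hzb⟩
  exact ⟨hup.ordConnected.convex.convexHull_subset_iff.2 (fun a ha => ⟨a, ha, le_rfl⟩) hy,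
    hlow.ordConnected.convex.convexHull_subset_iff.2 (fun b hb => ⟨b, hb, le_rfl⟩) hy⟩

lemma Int.disjoint_convexHull_image_cast {S T : Set ℤ} (hS : ∀ a ∈ S, ∀ b ∈ S, a ≤ b + 1)
    (hT : ∀ a ∈ T, ∀ b ∈ T, a ≤ b + 1) (hST : Disjoint S T) :
    Disjoint (convexHull ℝ ((↑) '' S : Set ℝ)) (convexHull ℝ ((↑) '' T)) := by
  refine disjoint_left.2 fun y hyS hyT => ?_
  obtain ⟨⟨_, ⟨a, ha, rfl⟩, hay⟩, ⟨_, ⟨b, hb, rfl⟩, hyb⟩⟩ :=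
    Real.exists_le_and_exists_ge_of_mem_convexHull hyS
  obtain ⟨⟨_, ⟨c, hc, rfl⟩, hcy⟩, ⟨_, ⟨d, hd, rfl⟩, hyd⟩⟩ :=
    Real.exists_le_and_exists_ge_of_mem_convexHull hyT
  have had : a ≤ d := by exact_mod_cast hay.trans hyd
  have hcb : c ≤ b := by exact_mod_cast hcy.trans hyb
  have := hS b hb a ha
  have := hT d hd c hc
  have := hST.ne_of_mem ha hc
  have := hST.ne_of_mem ha hd
  have := hST.ne_of_mem hb hc
  have := hST.ne_of_mem hb hd
  omega

open Geometry

/-- **Disjoint unions of paths are not `(1,2)`-Tverberg.** Let `K` be a finite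
1-dimensional simplicial complex in `ℝ^N` (every face has at most two vertices) whose
underlying graph `G` (vertices of `K`, adjacency given by the edges of `K`) contains no
cycle and has every vertex in at most two edges, i.e. is a disjoint union of path
graphs. Then there is a continuous map `f : |K| → ℝ` such that `f(σ) ∩ f(τ) = ∅` for
every pair of faces `σ, τ` of `K` with disjoint vertex sets. -/
theorem disjoint_union_of_paths_not_tverberg {N : ℕ}
    (K : SimplicialComplex ℝ (Fin N → ℝ)) (hfin : K.faces.Finite)
    (hdim : ∀ σ ∈ K.faces, σ.card ≤ 2)
    (G : SimpleGraph (Fin N → ℝ))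
    (hG : ∀ x y, G.Adj x y ↔ x ≠ y ∧ ({x, y} : Finset (Fin N → ℝ)) ∈ K.faces)
    (hforest : G.IsAcyclic)
    (hdeg : ∀ v, {w | G.Adj v w}.ncard ≤ 2) :
    ∃ f : C(↥K.space, ℝ), ∀ σ ∈ K.faces, ∀ τ ∈ K.faces, Disjoint σ τ →
      (f '' {x : ↥K.space | (x : Fin N → ℝ) ∈ convexHull ℝ (σ : Set (Fin N → ℝ))} ∩
        f '' {x : ↥K.space | (x : Fin N → ℝ) ∈ convexHull ℝ (τ : Set (Fin N → ℝ))}) = ∅ := by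
  have hvert : ∀ σ ∈ K.faces, ∀ p ∈ σ, p ∈ K.vertices := fun σ hσ p hp =>
    K.down_closed hσ (Finset.singleton_subset_iff.2 hp) (Finset.singleton_nonempty p)
  have hsupp : G.support ⊆ K.vertices := fun x ⟨y, hxy⟩ =>
    hvert _ ((hG x y).1 hxy).2 x (Finset.mem_insert_self x _)
  obtain ⟨h, hinj, hadj⟩ := SimpleGraph.exists_isLineEmbedding
    (hfin.preimage Finset.singleton_injective.injOn) hsupp hforest hdeg
  obtain ⟨f, hf⟩ :=
    SimplicialComplex.exists_continuousMap_mem_convexHull_image K hfin hdim fun x => (h x : ℝ)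
  have hface : ∀ σ ∈ K.faces, ∀ a ∈ h '' σ, ∀ b ∈ h '' σ, a ≤ b + 1 := by
    rintro σ hσ _ ⟨p, hp, rfl⟩ _ ⟨q, hq, rfl⟩
    rcases eq_or_ne p q with rfl | hpq
    · omega
    have hpqσ : {p, q} ⊆ σ := Finset.insert_subset hp (Finset.singleton_subset_iff.2 hq)
    have := (hadj p (hvert σ hσ p hp) q (hvert σ hσ q hq)).1
      ((hG p q).2 ⟨hpq, K.down_closed hσ hpqσ (Finset.insert_nonempty _ _)⟩)
    omega
  refine ⟨f, fun σ hσ τ hτ hστ => disjoint_iff_inter_eq_empty.1 ?_⟩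
  refine .mono (image_subset_iff.2 fun x => hf σ hσ x) (image_subset_iff.2 fun x => hf τ hτ x) ?_
  simp only [← image_image ((↑) : ℤ → ℝ) h]
  refine Int.disjoint_convexHull_image_cast (hface σ hσ) (hface τ hτ) (disjoint_left.2 ?_)
  rintro _ ⟨p, hp, rfl⟩ ⟨q, hq, hqp⟩
  obtain rfl := hinj (hvert τ hτ q hq) (hvert σ hσ p hp) hqp
  exact Finset.disjoint_left.1 hστ hp hq
end

section
/- Tverberg's theorem (affine version): let d ≥ 1 and r ≥ 1, and let x_1, …, x_{(d+1)(r−1)+1} be points in ℝ^d (with repetitions allowed). Then the index set {1, …, (d+1)(r−1)+1} can be partitioned into r pairwise disjoint subsets I_1, …, I_r such that the convex hulls of the point sets {x_i : i ∈ I_1}, …, {x_i : i ∈ I_r} have a point in common. -/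
/-!
Sarkaria's tensor trick reduces Tverberg's theorem to Bárány's colorful Carathéodory theorem.
Homogenize each point as `x̂ᵢ = (xᵢ, 1) ∈ ℝ^(d+1)` and take `r` vectors `v₁, …, v_r ∈ ℝ^(r-1)`
summing to zero whose only linear dependences are the constant ones. The `N = (d+1)(r-1)+1`
colour classes `{vⱼ ⊗ x̂ᵢ}ⱼ` in `ℝ^((r-1)(d+1))` each contain `0` in their convex hull, so some
transversal `vσ(i) ⊗ x̂ᵢ` does too: `∑ⱼ vⱼ ⊗ (∑_{σ i = j} wᵢ x̂ᵢ) = 0`. Hence the fibre sums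
`∑_{σ i = j} wᵢ x̂ᵢ` do not depend on `j`: all classes `σ⁻¹ {j}` carry the same weight and have
the same weighted centroid, which is the Tverberg point.

For colorful Carathéodory, pick the transversal whose hull is nearest to `0`, with nearest point
`y`. If `y ≠ 0`, then `y` lies in the convex hull of at most `dim E` vertices on the supporting
hyperplane `⟪y, ·⟫ = ‖y‖²`; recolouring a vertex not needed there by a point of its class with
`⟪y, ·⟫ ≤ 0` produces a hull that is closer to `0`.
-/

open Set Metric Module
open scoped RealInnerProductSpace

theorem exists_range_subset_image_ne {α ι κ : Type*} [Fintype ι] [Fintype κ] {z : ι → α}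
    {g : κ → α} (hzg : range z ⊆ range g) (hcard : Fintype.card ι < Fintype.card κ) :
    ∃ k, range z ⊆ g '' {i | i ≠ k} := by
  choose f hf using fun i => hzg (mem_range_self i)
  obtain ⟨k, hk⟩ : ∃ k, ∀ i, f i ≠ k := by
    by_contra! hsurj
    exact (Fintype.card_le_of_surjective f hsurj).not_gt hcard
  refine ⟨k, ?_⟩
  rintro _ ⟨i, rfl⟩
  exact ⟨f i, hk i, hf i⟩

theorem exists_apply_nonpos_of_zero_mem_convexHull {E : Type*} [AddCommGroup E] [Module ℝ E]
    (f : E →ₗ[ℝ] ℝ) {s : Set E} (hs : (0 : E) ∈ convexHull ℝ s) : ∃ x ∈ s, f x ≤ 0 := by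
  by_contra! hpos
  have : 0 < f 0 := convexHull_min hpos (convex_halfSpace_gt f.isLinear 0) hs
  simp at this

theorem exists_sum_smul_eq_of_mem_convexHull_range {E ι : Type*} [AddCommGroup E] [Module ℝ E]
    [Fintype ι] {g : ι → E} {y : E} (hy : y ∈ convexHull ℝ (range g)) :
    ∃ w : ι → ℝ, (∀ i, 0 ≤ w i) ∧ ∑ i, w i = 1 ∧ ∑ i, w i • g i = y := by
  classical
  rw [convexHull_range_eq_exists_affineCombination] at hy
  obtain ⟨s, w, hw0, hw1, rfl⟩ := hy
  refine ⟨fun i => if i ∈ s then w i else 0, fun i => ?_, ?_, ?_⟩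
  · dsimp only
    split_ifs with hi
    exacts [hw0 i hi, le_rfl]
  · rwa [Finset.sum_ite_mem, Finset.univ_inter]
  · simp only [ite_smul, zero_smul, Finset.sum_ite_mem, Finset.univ_inter,
      s.affineCombination_eq_linear_combination g w hw1]

theorem centerMass_fiber_mem_iInter_convexHull {ι β E : Type*} [Fintype ι] [Fintype β]
    [DecidableEq β] [AddCommGroup E] [Module ℝ E] {σ : ι → β} {x : ι → E} {w : ι → ℝ}
    (hw0 : ∀ i, 0 ≤ w i) (hw1 : ∑ i, w i = 1) (j₀ : β)
    (hw : ∀ j, ∑ i with σ i = j, w i = ∑ i with σ i = j₀, w i)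
    (hwx : ∀ j, ∑ i with σ i = j, w i • x i = ∑ i with σ i = j₀, w i • x i) :
    ({i | σ i = j₀} : Finset ι).centerMass w x ∈ ⋂ j, convexHull ℝ (x '' (σ ⁻¹' {j})) := by
  have hcard : (Fintype.card β : ℝ) * ∑ i with σ i = j₀, w i = 1 := by
    rw [← hw1, ← Finset.sum_fiberwise Finset.univ σ w]
    simp [hw]
  have hpos : 0 < ∑ i with σ i = j₀, w i :=
    pos_of_mul_pos_right (hcard ▸ one_pos) (Nat.cast_nonneg _)
  refine mem_iInter.2 fun j => ?_
  have hcm : ({i | σ i = j₀} : Finset ι).centerMass w x =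
      ({i | σ i = j} : Finset ι).centerMass w x := by
    simp only [Finset.centerMass, hw j, hwx j]
  rw [hcm]
  exact Finset.centerMass_mem_convexHull _ (fun i _ => hw0 i) (hw j ▸ hpos)
    (fun i hi => mem_image_of_mem x (by simpa using hi))

section InnerProductSpace

variable {E : Type*} [NormedAddCommGroup E] [InnerProductSpace ℝ E]

theorem norm_sq_le_inner_of_norm_eq_infDist {K : Set E} (hK : Convex ℝ K) {y z : E}
    (hy : y ∈ K) (hyK : ‖y‖ = infDist 0 K) (hz : z ∈ K) : ‖y‖ ^ 2 ≤ ⟪y, z⟫ := by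
  have hmin : ‖0 - y‖ = ⨅ w : K, ‖0 - (w : E)‖ := by
    simpa [infDist_eq_iInf, dist_eq_norm] using hyK
  have := (norm_eq_iInf_iff_real_inner_le_zero hK hy).1 hmin z hz
  rw [zero_sub, inner_neg_left, inner_sub_right, real_inner_self_eq_norm_sq] at this
  linarith

theorem AffineIndependent.card_le_finrank_of_inner_eq [FiniteDimensional ℝ E] {ι : Type*}
    [Fintype ι] {z : ι → E} (hz : AffineIndependent ℝ z) {y : E} (hy : y ≠ 0) {c : ℝ}
    (hc : ∀ i, ⟪y, z i⟫ = c) : Fintype.card ι ≤ finrank ℝ E := by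
  have hspan : vectorSpan ℝ (range z) ≤ LinearMap.ker (innerₛₗ ℝ y) := by
    rw [vectorSpan_def, Submodule.span_le]
    rintro _ ⟨_, ⟨i, rfl⟩, _, ⟨l, rfl⟩, rfl⟩
    simp [inner_sub_right, hc]
  have hne : vectorSpan ℝ (range z) ≠ ⊤ := fun htop =>
    hy (inner_self_eq_zero.1 (hspan (htop ▸ Submodule.mem_top : y ∈ vectorSpan ℝ (range z))))
  have := Submodule.finrank_lt hne
  have := hz.card_le_finrank_succ
  omega

theorem exists_mem_convexHull_image_ne_of_norm_eq_infDist [FiniteDimensional ℝ E] {κ : Type*}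
    [Fintype κ] (hκ : Fintype.card κ = finrank ℝ E + 1) {g : κ → E} {y : E}
    (hy : y ∈ convexHull ℝ (range g)) (hyK : ‖y‖ = infDist 0 (convexHull ℝ (range g)))
    (hy0 : y ≠ 0) : ∃ k, y ∈ convexHull ℝ (g '' {i | i ≠ k}) := by
  obtain ⟨ι, _, z, w, hzg, hz, hw0, hw1, hwz⟩ := eq_pos_convex_span_of_mem_convexHull hy
  have hge (i : ι) : ‖y‖ ^ 2 ≤ ⟪y, z i⟫ :=
    norm_sq_le_inner_of_norm_eq_infDist (convex_convexHull ℝ _) hy hyK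
      (subset_convexHull ℝ _ (hzg (mem_range_self i)))
  have hsum : ∑ i, w i * (⟪y, z i⟫ - ‖y‖ ^ 2) = 0 := by
    simp only [mul_sub, Finset.sum_sub_distrib, ← Finset.sum_mul, hw1, ← real_inner_smul_right,
      ← inner_sum, hwz, real_inner_self_eq_norm_sq, one_mul, sub_self]
  -- Every vertex carrying weight lies on the supporting hyperplane `⟪y, ·⟫ = ‖y‖ ^ 2`.
  have heq (i : ι) : ⟪y, z i⟫ = ‖y‖ ^ 2 := by
    have := (Finset.sum_eq_zero_iff_of_nonneg fun i _ =>
      mul_nonneg (hw0 i).le (sub_nonneg.2 (hge i))).1 hsum i (Finset.mem_univ i)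
    rcases mul_eq_zero.1 this with h | h
    · exact absurd h (hw0 i).ne'
    · linarith
  obtain ⟨k, hk⟩ := exists_range_subset_image_ne hzg
    (by have := hz.card_le_finrank_of_inner_eq hy0 heq; omega)
  exact ⟨k, mem_convexHull_of_exists_fintype w z (fun i => (hw0 i).le) hw1
    (fun i => hk (mem_range_self i)) hwz⟩

theorem colorful_caratheodory [FiniteDimensional ℝ E] {ι β : Type*} [Fintype ι] [Finite β]
    (hι : Fintype.card ι = finrank ℝ E + 1) (p : ι → β → E)
    (h0 : ∀ i, (0 : E) ∈ convexHull ℝ (range (p i))) :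
    ∃ σ : ι → β, (0 : E) ∈ convexHull ℝ (range fun i => p i (σ i)) := by
  classical
  have : Nonempty ι := Fintype.card_pos_iff.1 (by omega)
  have : Nonempty β := range_nonempty_iff_nonempty.1
    (convexHull_nonempty_iff.1 ⟨0, h0 (Classical.arbitrary ι)⟩)
  let K (τ : ι → β) := convexHull ℝ (range fun i => p i (τ i))
  obtain ⟨σ, hσ⟩ := Finite.exists_min fun τ => infDist 0 (K τ)
  obtain ⟨y, hy, hyK⟩ := ((finite_range fun i => p i (σ i)).isCompact_convexHull ℝ)
    |>.exists_infDist_eq_dist (range_nonempty _).convexHull (0 : E)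
  rw [dist_zero_left, eq_comm] at hyK
  refine ⟨σ, ?_⟩
  by_contra h0σ
  have hy0 : y ≠ 0 := by rintro rfl; exact h0σ hy
  obtain ⟨k, hk⟩ := exists_mem_convexHull_image_ne_of_norm_eq_infDist hι hy hyK hy0
  obtain ⟨_, ⟨j, rfl⟩, hj⟩ := exists_apply_nonpos_of_zero_mem_convexHull (innerₛₗ ℝ y) (h0 k)
  set τ := Function.update σ k j
  have hyτ : y ∈ K τ := by
    refine convexHull_mono ?_ hk
    rintro _ ⟨i, hik, rfl⟩
    exact ⟨i, by simp [τ, Function.update_of_ne hik]⟩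
  have hqτ : p k j ∈ K τ := subset_convexHull ℝ _ ⟨k, by simp [τ]⟩
  have hyτK : ‖y‖ = infDist 0 (K τ) :=
    le_antisymm (hyK ▸ hσ τ) (by simpa using infDist_le_dist_of_mem (x := 0) hyτ)
  have := norm_sq_le_inner_of_norm_eq_infDist (convex_convexHull ℝ _) hyτ hyτK hqτ
  simp only [innerₛₗ_apply_apply] at hj
  exact hy0 (norm_eq_zero.1 (by nlinarith [norm_nonneg y]))

end InnerProductSpace

section Sarkaria

variable {β κ : Type*} [DecidableEq β]

/-- `sarkariaVector j₀ j` is the basis vector `e_j` for `j ≠ j₀` and `-∑ₐ eₐ` for `j = j₀`: these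
`|β|` vectors in `ℝ^(|β| - 1)` sum to zero, and their only linear dependences are the constant
ones. -/
def sarkariaVector (j₀ j : β) (a : {a // a ≠ j₀}) : ℝ :=
  (if j = a then 1 else 0) - (if j = j₀ then 1 else 0)

theorem sum_mul_sarkariaVector [Fintype β] (α : β → ℝ) (j₀ : β) (a : {a // a ≠ j₀}) :
    ∑ j, α j * sarkariaVector j₀ j a = α a - α j₀ := by
  simp [sarkariaVector, mul_sub, Finset.sum_sub_distrib]

theorem eq_of_forall_sum_mul_sarkariaVector_eq_zero [Fintype β] {α : β → ℝ} {j₀ : β}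
    (h : ∀ a, ∑ j, α j * sarkariaVector j₀ j a = 0) (j : β) : α j = α j₀ := by
  by_cases hj : j = j₀
  · rw [hj]
  · have := h ⟨j, hj⟩
    rw [sum_mul_sarkariaVector] at this
    linarith

def homogenize (x : κ → ℝ) : Option κ → ℝ := fun o => o.elim 1 x

def sarkariaLift (j₀ : β) (x : κ → ℝ) (j : β) :
    EuclideanSpace ℝ ({a // a ≠ j₀} × Option κ) :=
  WithLp.toLp 2 fun ao => sarkariaVector j₀ j ao.1 * homogenize x ao.2

theorem zero_mem_convexHull_range_sarkariaLift [Fintype β] [Nonempty β] (j₀ : β) (x : κ → ℝ) :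
    (0 : EuclideanSpace ℝ _) ∈ convexHull ℝ (range (sarkariaLift j₀ x)) := by
  refine mem_convexHull_of_exists_fintype (fun _ => (Fintype.card β : ℝ)⁻¹) _
    (fun _ => by positivity) (by simp) (fun j => mem_range_self j) ?_
  ext ⟨a, o⟩
  have := sum_mul_sarkariaVector (fun _ => (1 : ℝ)) j₀ a
  simp only [one_mul, sub_self] at this
  simp [sarkariaLift, ← Finset.mul_sum, ← Finset.sum_mul, this]

theorem fiber_sums_eq_of_sum_smul_sarkariaLift_eq_zero [Fintype β] {ι : Type*} [Fintype ι] {j₀ : β}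
    {σ : ι → β} {x : ι → κ → ℝ} {w : ι → ℝ}
    (h : ∑ i, w i • sarkariaLift j₀ (x i) (σ i) = 0) (j : β) (o : Option κ) :
    ∑ i with σ i = j, w i * homogenize (x i) o = ∑ i with σ i = j₀, w i * homogenize (x i) o := by
  refine eq_of_forall_sum_mul_sarkariaVector_eq_zero
    (α := fun j => ∑ i with σ i = j, w i * homogenize (x i) o) (fun a => ?_) j
  have hao := congrArg (fun v => v (a, o)) h
  simp only [sarkariaLift, WithLp.ofLp_sum, WithLp.ofLp_smul, Finset.sum_apply, Pi.smul_apply,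
    smul_eq_mul, WithLp.ofLp_zero, Pi.zero_apply] at hao
  calc ∑ j, (∑ i with σ i = j, w i * homogenize (x i) o) * sarkariaVector j₀ j a
      = ∑ j, ∑ i with σ i = j, w i * homogenize (x i) o * sarkariaVector j₀ (σ i) a := by
        simp only [Finset.sum_mul]
        exact Finset.sum_congr rfl fun j _ => Finset.sum_congr rfl fun i hi => by
          rw [(Finset.mem_filter.1 hi).2]
    _ = 0 := by
        rw [Finset.sum_fiberwise, ← hao]
        exact Finset.sum_congr rfl fun i _ => by ring

theorem exists_tverberg_coloring [Fintype β] [Nonempty β] {ι : Type*} [Fintype ι] [Fintype κ]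
    (hcard : Fintype.card ι = (Fintype.card κ + 1) * (Fintype.card β - 1) + 1)
    (x : ι → κ → ℝ) : ∃ σ : ι → β, (⋂ j, convexHull ℝ (x '' (σ ⁻¹' {j}))).Nonempty := by
  let j₀ : β := Classical.arbitrary β
  have hdim : Fintype.card ι =
      finrank ℝ (EuclideanSpace ℝ ({a // a ≠ j₀} × Option κ)) + 1 := by
    simp [hcard, Fintype.card_subtype_compl, mul_comm]
  obtain ⟨σ, hσ⟩ := colorful_caratheodory hdim (fun i => sarkariaLift j₀ (x i))
    fun i => zero_mem_convexHull_range_sarkariaLift j₀ (x i)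
  obtain ⟨w, hw0, hw1, hw⟩ := exists_sum_smul_eq_of_mem_convexHull_range hσ
  have hfiber := fiber_sums_eq_of_sum_smul_sarkariaLift_eq_zero hw
  exact ⟨σ, _, centerMass_fiber_mem_iInter_convexHull hw0 hw1 j₀
    (fun j => by simpa [homogenize] using hfiber j none)
    (fun j => funext fun k => by simpa [homogenize] using hfiber j (some k))⟩

end Sarkaria

theorem tverberg_affine_general (d r : ℕ) (hr : 1 ≤ r)
    (x : Fin ((d + 1) * (r - 1) + 1) → (Fin d → ℝ)) :
    ∃ I : Fin r → Finset (Fin ((d + 1) * (r - 1) + 1)),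
      (∀ j l, j ≠ l → Disjoint (I j) (I l)) ∧
      (∀ m, ∃ j, m ∈ I j) ∧
      (⋂ j, convexHull ℝ (x '' (I j : Set (Fin ((d + 1) * (r - 1) + 1))))).Nonempty := by
  have : Nonempty (Fin r) := ⟨⟨0, hr⟩⟩
  obtain ⟨σ, hσ⟩ := exists_tverberg_coloring (β := Fin r) (by simp) x
  refine ⟨fun j => {i | σ i = j}, fun j l hjl => ?_, fun m => ⟨σ m, by simp⟩, ?_⟩
  · exact Finset.disjoint_filter.2 fun i _ hj hl => hjl (hj ▸ hl)
  · simpa [Set.preimage] using hσ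

/-- **Tverberg's theorem (affine version).** For `d ≥ 1`, `r ≥ 1`, any
`(d+1)(r-1)+1` points in `ℝ^d` (repetitions allowed) admit a partition of their index
set into `r` pairwise disjoint subsets whose convex hulls have a point in common. -/
theorem tverberg_affine (d r : ℕ) (hd : 1 ≤ d) (hr : 1 ≤ r)
    (x : Fin ((d + 1) * (r - 1) + 1) → (Fin d → ℝ)) :
    ∃ I : Fin r → Finset (Fin ((d + 1) * (r - 1) + 1)),
      (∀ j l, j ≠ l → Disjoint (I j) (I l)) ∧
      (∀ m, ∃ j, m ∈ I j) ∧
      (⋂ j, convexHull ℝ (x '' (I j : Set (Fin ((d + 1) * (r - 1) + 1))))).Nonempty :=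
  tverberg_affine_general d r hr x
end
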